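/- Let G ≤ Aut T be a self-similar group containing a rooted automorphism a whose label at the root is a d-cycle. If for each n ∈ ℕ the subgroup generated by the union of the sets ψ_u(st_G(L_n)) over all u ∈ L_n equals G, then G is super strongly fractal. -/

import Mathlib

open Equiv

namespace TreeFract

variable {X : Type*}

/-- The automorphism group of the rooted `d`-adic tree with vertex set the free
monoid `List X`: permutations of the vertex set fixing the root and sending
children of a vertex to children of its image (this is exactly incidence
preservation for the rooted tree). -/
def AutT (X : Type*) : Subgroup (Equiv.Perm (List X)) where
  carrier := {g | g [] = [] ∧ ∀ (u : List X) (x : X), ∃ y : X, g (u ++ [x]) = g u ++ [y]}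
  one_mem' := ⟨rfl, fun _ x => ⟨x, rfl⟩⟩
  mul_mem' := by
    rintro f g ⟨hf1, hf2⟩ ⟨hg1, hg2⟩
    refine ⟨?_, fun u x => ?_⟩
    · show f (g []) = []
      rw [hg1, hf1]
    · obtain ⟨y, hy⟩ := hg2 u x
      obtain ⟨z, hz⟩ := hf2 (g u) y
      exact ⟨z, by show f (g (u ++ [x])) = f (g u) ++ [z]; rw [hy, hz]⟩
  inv_mem' := by
    rintro g ⟨hg1, hg2⟩
    have hinj := g.injective
    refine ⟨?_, fun u x => ?_⟩
    · apply hinj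
      show g (g⁻¹ []) = g []
      rw [(show ∀ (g : Equiv.Perm (List X)) (y : List X), g (g⁻¹ y) = y from fun g => g.apply_symm_apply), hg1]
    · have hne : g⁻¹ (u ++ [x]) ≠ [] := by
        intro h
        have h2 : u ++ [x] = g [] := by
          conv_lhs => rw [← (show ∀ (g : Equiv.Perm (List X)) (y : List X), g (g⁻¹ y) = y from fun g => g.apply_symm_apply) g (u ++ [x]), h]
        rw [hg1] at h2
        simp at h2
      obtain ⟨y, hy⟩ : ∃ y, g⁻¹ (u ++ [x]) = (g⁻¹ (u ++ [x])).dropLast ++ [y] :=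
        ⟨(g⁻¹ (u ++ [x])).getLast hne, (List.dropLast_append_getLast hne).symm⟩
      obtain ⟨z, hz⟩ := hg2 ((g⁻¹ (u ++ [x])).dropLast) y
      have happ : g ((g⁻¹ (u ++ [x])).dropLast) ++ [z] = u ++ [x] := by
        rw [← hz, ← hy, (show ∀ (g : Equiv.Perm (List X)) (y : List X), g (g⁻¹ y) = y from fun g => g.apply_symm_apply)]
      have h2 : g ((g⁻¹ (u ++ [x])).dropLast) = u ∧ ([z] : List X) = [x] :=
        List.append_inj' happ rfl
      refine ⟨y, ?_⟩
      rw [hy]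
      congr 1
      apply hinj
      rw [(show ∀ (g : Equiv.Perm (List X)) (y : List X), g (g⁻¹ y) = y from fun g => g.apply_symm_apply), h2.1]

/-- The underlying function of the section of `g` at the vertex `u`. -/
def sectFun (g : Equiv.Perm (List X)) (u : List X) : List X → List X :=
  fun v => (g (u ++ v)).drop (g u).length

open scoped Classical in
/-- The section `g_u` of a tree automorphism `g` at a vertex `u`, i.e. the unique
automorphism with `g (u ++ v) = g u ++ g_u v` for all `v`.  (By convention it is
the identity for permutations which are not tree automorphisms.) -/
noncomputable def sect (g : Equiv.Perm (List X)) (u : List X) : Equiv.Perm (List X) :=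
  if h : Function.Bijective (sectFun g u) then Equiv.ofBijective _ h else 1

/-- The underlying function of the label of `g` at the vertex `u`. -/
def labelFun (g : Equiv.Perm (List X)) (u : List X) : X → X :=
  fun x => (g (u ++ [x])).getLastD x

open scoped Classical in
/-- The label `g_(u)` of a tree automorphism `g` at a vertex `u`: the permutation
of `X` with `g (u ++ [x]) = g u ++ [g_(u) x]`.  (By convention it is the identity
for permutations which are not tree automorphisms.) -/
noncomputable def label (g : Equiv.Perm (List X)) (u : List X) : Equiv.Perm X :=
  if h : Function.Bijective (labelFun g u) then Equiv.ofBijective _ h else 1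

/-- The stabilizer `st_G(u)` of the vertex `u` in `G`. -/
def stV (G : Subgroup (Equiv.Perm (List X))) (u : List X) : Subgroup (Equiv.Perm (List X)) where
  carrier := {g | g ∈ G ∧ g u = u}
  one_mem' := ⟨one_mem G, rfl⟩
  mul_mem' := by
    rintro f g ⟨hf, hf2⟩ ⟨hg, hg2⟩
    exact ⟨mul_mem hf hg, by show f (g u) = u; rw [hg2, hf2]⟩
  inv_mem' := by
    rintro g ⟨hg, hg2⟩
    refine ⟨inv_mem hg, ?_⟩
    apply g.injective
    show g (g⁻¹ u) = g u
    rw [(show ∀ (g : Equiv.Perm (List X)) (y : List X), g (g⁻¹ y) = y from fun g => g.apply_symm_apply), hg2]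

/-- The stabilizer `st_G(L_n)` of the `n`-th level in `G`. -/
def stL (G : Subgroup (Equiv.Perm (List X))) (n : ℕ) : Subgroup (Equiv.Perm (List X)) where
  carrier := {g | g ∈ G ∧ ∀ u : List X, u.length = n → g u = u}
  one_mem' := ⟨one_mem G, fun _ _ => rfl⟩
  mul_mem' := by
    rintro f g ⟨hf, hf2⟩ ⟨hg, hg2⟩
    exact ⟨mul_mem hf hg, fun u hu => by show f (g u) = u; rw [hg2 u hu, hf2 u hu]⟩
  inv_mem' := by
    rintro g ⟨hg, hg2⟩
    refine ⟨inv_mem hg, fun u hu => ?_⟩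
    apply g.injective
    show g (g⁻¹ u) = g u
    rw [(show ∀ (g : Equiv.Perm (List X)) (y : List X), g (g⁻¹ y) = y from fun g => g.apply_symm_apply), hg2 u hu]

/-- `G` is self-similar: sections of elements of `G` lie in `G`. -/
def SelfSimilar (G : Subgroup (Equiv.Perm (List X))) : Prop :=
  ∀ g ∈ G, ∀ u : List X, sect g u ∈ G

/-- `G` acts transitively on the first level of the tree. -/
def FirstLevelTransitive (G : Subgroup (Equiv.Perm (List X))) : Prop :=
  ∀ x y : X, ∃ g ∈ G, g [x] = [y]

/-- `G` is level transitive: it acts transitively on every level of the tree. -/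
def LevelTransitive (G : Subgroup (Equiv.Perm (List X))) : Prop :=
  ∀ (n : ℕ) (u v : List X), u.length = n → v.length = n → ∃ g ∈ G, g u = v

/-- `G` is fractal: `ψ_u(st_G(u)) = G` for every vertex `u`. -/
def Fractal (G : Subgroup (Equiv.Perm (List X))) : Prop :=
  ∀ u : List X,
    (fun g => sect g u) '' (stV G u : Set (Equiv.Perm (List X))) = (G : Set (Equiv.Perm (List X)))

/-- `G` is strongly fractal: `ψ_x(st_G(L_1)) = G` for every first-level vertex `x`. -/
def StronglyFractal (G : Subgroup (Equiv.Perm (List X))) : Prop :=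
  ∀ x : X,
    (fun g => sect g [x]) '' (stL G 1 : Set (Equiv.Perm (List X))) = (G : Set (Equiv.Perm (List X)))

/-- `G` is super strongly fractal: `ψ_u(st_G(L_n)) = G` for every `n` and every `u ∈ L_n`. -/
def SuperStronglyFractal (G : Subgroup (Equiv.Perm (List X))) : Prop :=
  ∀ (n : ℕ) (u : List X), u.length = n →
    (fun g => sect g u) '' (stL G n : Set (Equiv.Perm (List X))) = (G : Set (Equiv.Perm (List X)))

/-- The normal closure `⟨S⟩^G` of a subset `S ⊆ G` in the subgroup `G`, realized as a
subgroup of the ambient group: the subgroup generated by all `G`-conjugates of `S`. -/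
def normalClosureIn (G : Subgroup (Equiv.Perm (List X))) (S : Set (Equiv.Perm (List X))) :
    Subgroup (Equiv.Perm (List X)) :=
  Subgroup.closure {t | ∃ g ∈ G, ∃ s ∈ S, t = g * s * g⁻¹}

end TreeFract
namespace TreeFract

/-! ### The Hanoi towers generators -/

section Hanoi

variable {d : ℕ}

/-- The underlying function of the automorphism `a_{ij}` of the Hanoi Towers group:
it swaps the first occurrence of `i` or `j` in a word. -/
def hanoiFun (i j : Fin d) : List (Fin d) → List (Fin d)
  | [] => []
  | x :: w => if x = i then j :: w else if x = j then i :: w else x :: hanoiFun i j w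

lemma hanoiFun_invol (i j : Fin d) : ∀ w, hanoiFun i j (hanoiFun i j w) = w
  | [] => rfl
  | x :: w => by
    by_cases h1 : x = i
    · subst h1
      by_cases h2 : j = x
      · simp [hanoiFun, h2]
      · simp [hanoiFun, h2]
    · by_cases h2 : x = j
      · subst h2
        simp [hanoiFun, h1]
      · simp [hanoiFun, h1, h2, hanoiFun_invol i j w]

/-- The automorphism `a_{ij}` of the `d`-adic tree: its label at the root is the
transposition `(x_i x_j)`, its sections at the first-level vertices `x_i` and `x_j`
are trivial and all its other first-level sections equal `a_{ij}` again. -/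
def hanoiA (i j : Fin d) : Equiv.Perm (List (Fin d)) :=
  ⟨hanoiFun i j, hanoiFun i j, hanoiFun_invol i j, hanoiFun_invol i j⟩

end Hanoi

/-- The generator `b_i = a_{i,i+1}` (here `i` runs through `0, …, d-2`,
corresponding to the paper's `b_1, …, b_{d-1}`). -/
def hanoiB (d : ℕ) (i : ℕ) (h : i + 1 < d) : Equiv.Perm (List (Fin d)) :=
  hanoiA ⟨i, Nat.lt_of_succ_lt h⟩ ⟨i + 1, h⟩

/-- The subgroup `G = ⟨b_1, …, b_{d-1}⟩` of the Hanoi Towers group. -/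
def hanoiGroup (d : ℕ) : Subgroup (Equiv.Perm (List (Fin d))) :=
  Subgroup.closure {g | ∃ (i : ℕ) (h : i + 1 < d), g = hanoiB d i h}

/-! ### GGS groups (and the rooted automorphism `a`) -/

section GGS

variable {p : ℕ}

/-- The function adding `m` to the first letter of a word over `ZMod p`. -/
def rotFun (m : ZMod p) : List (ZMod p) → List (ZMod p)
  | [] => []
  | x :: w => (x + m) :: w

/-- The rooted automorphism of the `p`-adic tree whose label at the root is the
`p`-cycle `x ↦ x + m`; for `m = 1` this is the generator `a` of a GGS-group
(identifying `x_i` with `i mod p`). -/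
def rotPerm (m : ZMod p) : Equiv.Perm (List (ZMod p)) :=
  ⟨rotFun m, rotFun (-m),
    by intro w; cases w <;> simp [rotFun],
    by intro w; cases w <;> simp [rotFun]⟩

/-- The underlying function of the GGS generator `b` with defining vector `e`
(the value `e 0` is irrelevant; `e i` for `i ≠ 0` are the coordinates
`e_1, …, e_{p-1}`): `b` fixes the first level, its section at `x_i` is
`a^{e_i}` for `i = 1, …, p-1` and its section at `x_p` (identified with `0`)
is `b` again. -/
def ggsFun (e : ZMod p → ZMod p) : List (ZMod p) → List (ZMod p)
  | [] => []
  | x :: w => if x = 0 then x :: ggsFun e w else x :: rotFun (e x) w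

lemma ggsFun_inv (e : ZMod p → ZMod p) : ∀ w, ggsFun (fun i => -(e i)) (ggsFun e w) = w
  | [] => rfl
  | x :: w => by
    by_cases h : x = 0
    · simp only [ggsFun, if_pos h]
      rw [ggsFun_inv e w]
    · simp only [ggsFun, if_neg h]
      cases w <;> simp [rotFun]

/-- The GGS generator `b` with defining vector `e`, as a tree automorphism. -/
def ggsB (e : ZMod p → ZMod p) : Equiv.Perm (List (ZMod p)) :=
  ⟨ggsFun e, ggsFun (fun i => -(e i)), ggsFun_inv e, by
    intro w
    have h := ggsFun_inv (fun i => -(e i)) w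
    simpa using h⟩

end GGS

/-- The GGS-group `G = ⟨a, b⟩` over the `p`-adic tree with defining vector `e`. -/
def ggsGroup (p : ℕ) (e : ZMod p → ZMod p) : Subgroup (Equiv.Perm (List (ZMod p))) :=
  Subgroup.closure {rotPerm 1, ggsB e}

/-! ### The first Grigorchuk group -/

/-- The three directed generators `b, c, d` (for `k % 3 = 0, 1, 2` respectively) of the
first Grigorchuk group, defined by the mutual recursion
`b = (a, c)`, `c = (a, d)`, `d = (1, b)` (identifying `x_1` with `0` and `x_2` with `1`). -/
def griFun : ℕ → List (ZMod 2) → List (ZMod 2)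
  | _, [] => []
  | k, x :: w => if x = 0 then (if k % 3 = 2 then x :: w else x :: rotFun 1 w)
                 else x :: griFun (k + 1) w

lemma griFun_invol : ∀ (w : List (ZMod 2)) (k : ℕ), griFun k (griFun k w) = w
  | [], _ => rfl
  | x :: w, k => by
    by_cases h : x = 0
    · by_cases h3 : k % 3 = 2
      · simp [griFun, h, h3]
      · simp only [griFun, if_pos h, if_neg h3]
        cases w with
        | nil => rfl
        | cons y v =>
            have hy : y + 1 + 1 = y := by
              rw [add_assoc]
              simp [show (1 : ZMod 2) + 1 = 0 from rfl]
            simp [rotFun, hy]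
    · simp only [griFun, if_neg h]
      rw [griFun_invol w (k + 1)]

/-- The generator `b` of the first Grigorchuk group, with sections `(a, c)`. -/
def griB : Equiv.Perm (List (ZMod 2)) :=
  ⟨griFun 0, griFun 0, fun w => griFun_invol w 0, fun w => griFun_invol w 0⟩

/-- The generator `c` of the first Grigorchuk group, with sections `(a, d)`. -/
def griC : Equiv.Perm (List (ZMod 2)) :=
  ⟨griFun 1, griFun 1, fun w => griFun_invol w 1, fun w => griFun_invol w 1⟩

/-- The generator `d` of the first Grigorchuk group, with sections `(1, b)`. -/
def griD : Equiv.Perm (List (ZMod 2)) :=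
  ⟨griFun 2, griFun 2, fun w => griFun_invol w 2, fun w => griFun_invol w 2⟩

/-- The first Grigorchuk group `𝒢 = ⟨a, b, c, d⟩` acting on the binary tree. -/
def grigorchukGroup : Subgroup (Equiv.Perm (List (ZMod 2))) :=
  Subgroup.closure {rotPerm 1, griB, griC, griD}

end TreeFract

/-!
Two vertices `u, v` of the same level `n` have the same set of sections `ψ_u(st_G(L_n))`
as soon as some `h ∈ G` maps `u` to `v` with trivial section at `u`: conjugation by `h`
then transports `ψ_u(st_G(L_n))` into `ψ_v(st_G(L_n))`. Such an `h` exists by induction on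
`n`: to change the letter after a prefix `w` of length `< n`, take `h ∈ st_G(L_{|w|})` with
`h_w = a` (super strong fractality at a lower level); as `a` is rooted with a `d`-cycle
at the root, repeating this reaches every letter. Hence all the sets `ψ_u(st_G(L_n))` with
`u ∈ L_n` coincide; each is a subgroup, so it contains the subgroup they generate, which is `G`.
-/

namespace TreeFract

section Sections

variable {X : Type*}

lemma autT_length {g : Perm (List X)} (hg : g ∈ AutT X) (u : List X) :
    (g u).length = u.length := by
  induction u using List.reverseRecOn with
  | nil => rw [hg.1]
  | append_singleton u x ih =>
      obtain ⟨y, hy⟩ := hg.2 u x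
      simp [hy, ih]

lemma autT_exists_append {g : Perm (List X)} (hg : g ∈ AutT X) (u v : List X) :
    ∃ w : List X, g (u ++ v) = g u ++ w := by
  induction v using List.reverseRecOn with
  | nil => exact ⟨[], by simp⟩
  | append_singleton v x ih =>
      obtain ⟨w, hw⟩ := ih
      obtain ⟨y, hy⟩ := hg.2 (u ++ v) x
      exact ⟨w ++ [y], by rw [← List.append_assoc, hy, hw, List.append_assoc]⟩

lemma sectFun_spec {g : Perm (List X)} (hg : g ∈ AutT X) (u v : List X) :
    g (u ++ v) = g u ++ sectFun g u v := by
  obtain ⟨w, hw⟩ := autT_exists_append hg u v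
  rw [sectFun, hw, List.drop_left]

lemma sectFun_leftInverse {g : Perm (List X)} (hg : g ∈ AutT X) (u : List X) :
    Function.LeftInverse (sectFun g⁻¹ (g u)) (sectFun g u) := by
  intro v
  rw [sectFun, ← sectFun_spec hg u v]
  simp only [Perm.coe_inv, Equiv.symm_apply_apply, List.drop_left]

lemma sectFun_bijective {g : Perm (List X)} (hg : g ∈ AutT X) (u : List X) :
    Function.Bijective (sectFun g u) := by
  refine ⟨(sectFun_leftInverse hg u).injective, fun w => ⟨sectFun g⁻¹ (g u) w, ?_⟩⟩
  simpa using sectFun_leftInverse (inv_mem hg) (g u) w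

lemma sect_spec {g : Perm (List X)} (hg : g ∈ AutT X) (u v : List X) :
    g (u ++ v) = g u ++ sect g u v := by
  rw [sect, dif_pos (sectFun_bijective hg u)]
  exact sectFun_spec hg u v

lemma sect_unique {g : Perm (List X)} (hg : g ∈ AutT X) (u : List X)
    (s : Perm (List X)) (hs : ∀ v, g (u ++ v) = g u ++ s v) : sect g u = s :=
  Equiv.ext fun v => List.append_cancel_left ((sect_spec hg u v).symm.trans (hs v))

lemma sect_one (u : List X) : sect (1 : Perm (List X)) u = 1 :=
  sect_unique (one_mem _) u 1 fun _ => rfl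

lemma sect_mem_autT {g : Perm (List X)} (hg : g ∈ AutT X) (u : List X) :
    sect g u ∈ AutT X := by
  refine ⟨by simpa using sect_spec hg u [], fun v x => ?_⟩
  obtain ⟨y, hy⟩ := hg.2 (u ++ v) x
  refine ⟨y, List.append_cancel_left (?_ : g u ++ _ = g u ++ _)⟩
  rw [← sect_spec hg, ← List.append_assoc, hy, sect_spec hg u v, List.append_assoc]

lemma sect_mul {f g : Perm (List X)} (hf : f ∈ AutT X) (hg : g ∈ AutT X) (u : List X) :
    sect (f * g) u = sect f (g u) * sect g u :=
  sect_unique (mul_mem hf hg) u _ fun v => by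
    simp only [Perm.mul_apply, sect_spec hg u v, sect_spec hf (g u)]

lemma sect_inv {g : Perm (List X)} (hg : g ∈ AutT X) (u : List X) :
    sect g⁻¹ u = (sect g (g⁻¹ u))⁻¹ := by
  have h := sect_mul hg (inv_mem hg) u
  rw [mul_inv_cancel, sect_one] at h
  exact eq_inv_of_mul_eq_one_right h.symm

lemma sect_append {g : Perm (List X)} (hg : g ∈ AutT X) (u v : List X) :
    sect g (u ++ v) = sect (sect g u) v :=
  sect_unique hg (u ++ v) _ fun w => by
    rw [List.append_assoc, sect_spec hg u (v ++ w), sect_spec (sect_mem_autT hg u) v w,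
      sect_spec hg u v, List.append_assoc]

end Sections

section Rooted

variable {X : Type*} [Finite X] {a : Perm (List X)}

lemma apply_singleton_eq_label (ha : a ∈ AutT X) (x : X) :
    a [x] = [label a [] x] := by
  have hspec : ∀ x, a [x] = [labelFun a [] x] := fun x => by
    obtain ⟨y, hy⟩ := ha.2 [] x
    rw [ha.1, List.nil_append, List.nil_append] at hy
    rw [labelFun, List.nil_append, hy]
    rfl
  have hinj : Function.Injective (labelFun a []) := fun x₁ x₂ h =>
    List.singleton_injective (a.injective (by rw [hspec, hspec, h]))
  rw [label, dif_pos (Finite.injective_iff_bijective.1 hinj)]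
  exact hspec x

lemma rooted_apply_cons (ha : a ∈ AutT X) (hroot : ∀ x : X, sect a [x] = 1) (x : X)
    (w : List X) : a (x :: w) = label a [] x :: w := by
  rw [← List.singleton_append, sect_spec ha, hroot, apply_singleton_eq_label ha]
  rfl

end Rooted

section Transport

variable {X : Type*} {G : Subgroup (Perm (List X))}

lemma conj_mem_stL (hG : G ≤ AutT X) {n : ℕ} {g h : Perm (List X)} (hg : g ∈ stL G n)
    (hh : h ∈ G) : h * g * h⁻¹ ∈ stL G n := by
  refine ⟨mul_mem (mul_mem hh hg.1) (inv_mem hh), fun u hu => ?_⟩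
  have hu' : (h⁻¹ u).length = n := by rw [autT_length (inv_mem (hG hh)), hu]
  rw [Perm.mul_apply, Perm.mul_apply, hg.2 _ hu']
  exact h.apply_symm_apply u

def RigidTransport (G : Subgroup (Perm (List X))) (u v : List X) : Prop :=
  ∃ h ∈ G, h u = v ∧ sect h u = 1

lemma RigidTransport.refl (u : List X) : RigidTransport G u u :=
  ⟨1, one_mem G, rfl, sect_one u⟩

lemma RigidTransport.trans (hG : G ≤ AutT X) {u v w : List X} (huv : RigidTransport G u v)
    (hvw : RigidTransport G v w) : RigidTransport G u w := by
  obtain ⟨h₁, hh₁, rfl, hs₁⟩ := huv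
  obtain ⟨h₂, hh₂, rfl, hs₂⟩ := hvw
  exact ⟨h₂ * h₁, mul_mem hh₂ hh₁, rfl,
    by rw [sect_mul (hG hh₂) (hG hh₁), hs₁, hs₂, one_mul]⟩

lemma RigidTransport.image_sect_subset (hG : G ≤ AutT X) {n : ℕ} {u v : List X}
    (huv : RigidTransport G u v) (hu : u.length = n) :
    (fun g => sect g u) '' (stL G n : Set (Perm (List X))) ⊆
      (fun g => sect g v) '' (stL G n : Set (Perm (List X))) := by
  obtain ⟨h, hh, rfl, hs⟩ := huv
  rintro _ ⟨g, hg, rfl⟩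
  have hhA := hG hh
  refine ⟨h * g * h⁻¹, conj_mem_stL hG hg hh, ?_⟩
  simp only [sect_mul (mul_mem hhA (hG hg.1)) (inv_mem hhA), sect_mul hhA (hG hg.1),
    sect_inv hhA, Perm.coe_inv, Equiv.symm_apply_apply, hg.2 u hu, hs, inv_one, one_mul,
    mul_one]

variable {a : Perm (List X)}

lemma rigidTransport_label [Finite X] (hG : G ≤ AutT X) (ha : a ∈ AutT X)
    (hroot : ∀ x : X, sect a [x] = 1) {w : List X} {h : Perm (List X)} (hh : h ∈ G)
    (hfix : h w = w) (hsect : sect h w = a) (y : X) (t : List X) :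
    RigidTransport G (w ++ y :: t) (w ++ label a [] y :: t) := by
  refine ⟨h, hh, ?_, ?_⟩
  · rw [sect_spec (hG hh), hfix, hsect, rooted_apply_cons ha hroot]
  · rw [← List.singleton_append, sect_append (hG hh), sect_append (sect_mem_autT (hG hh) w),
      hsect, hroot, sect_one]

lemma rigidTransport_label_pow [Finite X] (hG : G ≤ AutT X) (ha : a ∈ AutT X)
    (hroot : ∀ x : X, sect a [x] = 1) {w : List X} {h : Perm (List X)} (hh : h ∈ G)
    (hfix : h w = w) (hsect : sect h w = a) (y : X) (t : List X) :
    ∀ i : ℕ, RigidTransport G (w ++ y :: t) (w ++ (label a [] ^ i) y :: t)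
  | 0 => RigidTransport.refl _
  | i + 1 => by
    rw [pow_succ', Perm.mul_apply]
    exact (rigidTransport_label_pow hG ha hroot hh hfix hsect y t i).trans hG
      (rigidTransport_label hG ha hroot hh hfix hsect _ t)

lemma rigidTransport_of_length_eq [Finite X] (hG : G ≤ AutT X) (ha : a ∈ AutT X)
    (hroot : ∀ x : X, sect a [x] = 1)
    (hlabel : ∀ y y' : X, ∃ i : ℕ, (label a [] ^ i) y = y')
    {n : ℕ} (hfrac : ∀ w : List X, w.length < n → ∃ h ∈ G, h w = w ∧ sect h w = a)
    {u v : List X} (hu : u.length = n) (huv : u.length = v.length) :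
    RigidTransport G u v := by
  suffices H : ∀ (t t' w : List X), t.length = t'.length → (w ++ t).length = n →
      RigidTransport G (w ++ t) (w ++ t') from H u v [] huv hu
  intro t
  induction t with
  | nil =>
    intro t' w ht _
    rw [List.length_eq_zero_iff.1 ht.symm]
    exact RigidTransport.refl _
  | cons y t ih =>
    rintro (_ | ⟨y', t'⟩) w ht hn
    · simp at ht
    obtain ⟨h, hh, hfix, hsect⟩ := hfrac w (by simp at hn; omega)
    obtain ⟨i, rfl⟩ := hlabel y y'
    have hstep := ih t' (w ++ [(label a [] ^ i) y]) (by simpa using ht) (by simp at hn ⊢; omega)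
    simp only [List.append_assoc, List.singleton_append] at hstep
    exact (rigidTransport_label_pow hG ha hroot hh hfix hsect y t i).trans hG hstep

noncomputable def sectHom (hG : G ≤ AutT X) {n : ℕ} {u : List X}
    (hu : u.length = n) : stL G n →* Perm (List X) :=
  MonoidHom.mk' (fun g => sect g u) fun f g => by
    simp only [Subgroup.coe_mul, sect_mul (hG f.2.1) (hG g.2.1), g.2.2 u hu]

lemma image_sect_stL_eq (hG : G ≤ AutT X) (hss : SelfSimilar G) {n : ℕ}
    (hgen : Subgroup.closure {t | ∃ v : List X, v.length = n ∧ ∃ g ∈ stL G n,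
      t = sect g v} = G)
    {u : List X} (hu : u.length = n)
    (htr : ∀ v : List X, v.length = n → RigidTransport G v u) :
    (fun g => sect g u) '' (stL G n : Set (Perm (List X))) = G := by
  have hrange : ((sectHom hG hu).range : Set (Perm (List X))) =
      (fun g => sect g u) '' (stL G n : Set (Perm (List X))) := by
    rw [MonoidHom.coe_range, Set.image_eq_range]
    rfl
  have hle : Subgroup.closure {t | ∃ v : List X, v.length = n ∧ ∃ g ∈ stL G n,
      t = sect g v} ≤ (sectHom hG hu).range := by
    rw [Subgroup.closure_le, hrange]
    rintro _ ⟨v, hv, g, hg, rfl⟩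
    exact (htr v hv).image_sect_subset hG hv ⟨g, hg, rfl⟩
  refine subset_antisymm (Set.image_subset_iff.2 fun g hg => hss g hg.1 u) fun t ht => ?_
  rw [← hgen] at ht
  exact hrange ▸ hle ht

end Transport

/-- Let `G ≤ Aut T` be self-similar, containing a rooted
automorphism `a` whose root label is a `d`-cycle.  If for each `n` the subgroup
generated by `⋃_{u ∈ L_n} ψ_u(st_G(L_n))` is all of `G`, then `G` is super strongly
fractal. -/
theorem superStronglyFractal_of_generation (X : Type*) [Fintype X] [DecidableEq X]
    (G : Subgroup (Equiv.Perm (List X))) (hG : G ≤ AutT X) (hss : SelfSimilar G)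
    (a : Equiv.Perm (List X)) (haG : a ∈ G)
    (hroot : ∀ x : X, sect a [x] = 1)
    (hcyc : (label a ([] : List X)).IsCycle)
    (hcycsupp : (label a ([] : List X)).support = Finset.univ)
    (hgen : ∀ n : ℕ,
      Subgroup.closure {t | ∃ u : List X, u.length = n ∧ ∃ g ∈ stL G n, t = sect g u} = G) :
    SuperStronglyFractal G := by
  have hmoves : ∀ y : X, label a [] y ≠ y := fun y =>
    Perm.mem_support.1 (hcycsupp ▸ Finset.mem_univ y)
  have hlabel : ∀ y y' : X, ∃ i : ℕ, (label a [] ^ i) y = y' := fun y y' =>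
    hcyc.exists_pow_eq (hmoves y) (hmoves y')
  intro n
  induction n using Nat.strong_induction_on with
  | _ n IH =>
    intro u hu
    have hfrac : ∀ w : List X, w.length < n → ∃ h ∈ G, h w = w ∧ sect h w = a := by
      intro w hw
      obtain ⟨h, hh, hsect⟩ :
          a ∈ (fun g => sect g w) '' (stL G w.length : Set (Perm (List X))) := by
        rw [IH _ hw w rfl]
        exact haG
      exact ⟨h, hh.1, hh.2 w rfl, hsect⟩
    exact image_sect_stL_eq hG hss (hgen n) hu fun v hv =>
      rigidTransport_of_length_eq hG (hG haG) hroot hlabel hfrac hv (hv.trans hu.symm)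

end TreeFract
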